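/- Let the pairs (S_{1,i},S_{2,i}), i = 1,…,n, be i.i.d. finite-valued, let M1, M2 be finite-valued random variables that are mutually independent and jointly independent of (S1^n,S2^n), and let M12 = f12(M1,S1^n) and M21 = f21(M2,M12,S2^n) for deterministic functions f12, f21. Then I(M21;S2^n|M12,S1^n) = Σ_{i=1}^n I(S_{2,i};V_i|U_i,S_{1,i}), where U_i = (M12, S1^{i−1}, S2_{i+1}^n) and V_i = M21. -/

import Mathlib

/-!
Expanding `I(M₂₁; S₂ⁿ | M₁₂, S₁ⁿ)` by the chain rule over the coordinates of `S₂ⁿ`, last one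
first, gives the terms `I(S₂ᵢ; M₂₁ | M₁₂, S₁ⁿ, S₂ᵢ₊₁ⁿ)`. Applying the chain rule twice, `S₁ᵢ₊₁ⁿ`
may be dropped from the conditioning as soon as `S₂ᵢ` and `S₁ᵢ₊₁ⁿ` are conditionally independent
given `Uᵢ, S₁ᵢ` and also given `Uᵢ, S₁ᵢ, M₂₁`. Both follow from one factorization: with
`Sⱼ = (S₁ⱼ, S₂ⱼ)`, the blocks `(M₂, Sⁱ)` and `(M₁, Sᵢ₊₁ⁿ)` are independent, so their joint law is
`α(u) β(t)`, and a joint law of the form `α(u, r) β(t, r)` survives enlarging `r` by a function of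
`(u, r)` or of `(t, r)`.
Revealing `S₁ⁱ`, `S₂ᵢ₊₁ⁿ`, then `M₁₂` (a function of `M₁`, `S₁ⁿ`) and `M₂₁` (a function of `M₂`,
`M₁₂`, `S₂ⁿ`) is such a sequence of enlargements.
-/

open scoped BigOperators Classical
open Finset

namespace Paper

variable {Ω : Type} [Fintype Ω]

/-- `pr μ X a` is the probability that the random variable `X` takes the value `a`
under the pmf `μ` on the finite sample space `Ω`. -/
noncomputable def pr {A : Type} (μ : Ω → ℝ) (X : Ω → A) (a : A) : ℝ :=
  ∑ ω, if X ω = a then μ ω else 0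

/-- `μ` is a probability mass function on the finite space `Ω`. -/
def IsPMF (μ : Ω → ℝ) : Prop := (∀ ω, 0 ≤ μ ω) ∧ ∑ ω, μ ω = 1

/-- Shannon entropy (in bits) of the random variable `X` under `μ`. -/
noncomputable def ent {A : Type} [Fintype A] (μ : Ω → ℝ) (X : Ω → A) : ℝ :=
  -∑ a, pr μ X a * Real.logb 2 (pr μ X a)

/-- Mutual information `I(X;Y)` (in bits) under `μ`. -/
noncomputable def mi {A B : Type} [Fintype A] [Fintype B] (μ : Ω → ℝ)
    (X : Ω → A) (Y : Ω → B) : ℝ :=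
  ent μ X + ent μ Y - ent μ (fun ω => (X ω, Y ω))

/-- Conditional mutual information `I(X;Y|Z)` (in bits) under `μ`. -/
noncomputable def cmi {A B C : Type} [Fintype A] [Fintype B] [Fintype C] (μ : Ω → ℝ)
    (X : Ω → A) (Y : Ω → B) (Z : Ω → C) : ℝ :=
  ent μ (fun ω => (X ω, Z ω)) + ent μ (fun ω => (Y ω, Z ω))
    - ent μ (fun ω => (X ω, Y ω, Z ω)) - ent μ Z

/-- `X` and `Y` are conditionally independent given `Z` under `μ`:
`P(X = a, Y = b | Z = c) = P(X = a | Z = c) · P(Y = b | Z = c)`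
whenever `P(Z = c) ≠ 0`. -/
def CondIndep {A B C : Type} (μ : Ω → ℝ) (X : Ω → A) (Y : Ω → B) (Z : Ω → C) : Prop :=
  ∀ a b c, pr μ Z c ≠ 0 →
    pr μ (fun ω => (X ω, Y ω, Z ω)) (a, b, c) * pr μ Z c
      = pr μ (fun ω => (X ω, Z ω)) (a, c) * pr μ (fun ω => (Y ω, Z ω)) (b, c)

end Paper

namespace Paper

variable {Ω : Type}

def SameFibers {A B : Type} (X : Ω → A) (Y : Ω → B) : Prop :=
  ∀ ω ω', X ω = X ω' ↔ Y ω = Y ω'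

lemma sameFibers_refl {A : Type} (X : Ω → A) : SameFibers X X := fun _ _ => Iff.rfl

lemma SameFibers.prod {A B C D : Type} {X : Ω → A} {Y : Ω → B} {X' : Ω → C} {Y' : Ω → D}
    (hX : SameFibers X X') (hY : SameFibers Y Y') :
    SameFibers (fun ω => (X ω, Y ω)) (fun ω => (X' ω, Y' ω)) := by
  intro ω ω'
  simp only [Prod.mk.injEq, hX ω ω', hY ω ω']

variable [Fintype Ω]

lemma pr_congr {A B : Type} {μ : Ω → ℝ} {X : Ω → A} {Y : Ω → B} {a : A} {b : B}
    (h : ∀ ω, X ω = a ↔ Y ω = b) : pr μ X a = pr μ Y b :=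
  Finset.sum_congr rfl fun ω _ => if_congr (h ω) rfl rfl

lemma le_pr_apply {A : Type} {μ : Ω → ℝ} (hμ : ∀ ω, 0 ≤ μ ω) (X : Ω → A) (ω : Ω) :
    μ ω ≤ pr μ X (X ω) := by
  have := Finset.single_le_sum (f := fun ω' => if X ω' = X ω then μ ω' else 0)
    (fun ω' _ => by split_ifs <;> simp [hμ ω']) (Finset.mem_univ ω)
  simpa [pr] using this

lemma ent_eq_neg_sum {A : Type} [Fintype A] (μ : Ω → ℝ) (X : Ω → A) :
    ent μ X = -∑ ω, μ ω * Real.logb 2 (pr μ X (X ω)) := by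
  simp only [ent, pr, Finset.sum_mul]
  rw [Finset.sum_comm]
  simp [ite_mul]

lemma SameFibers.pr_apply_eq {A B : Type} {X : Ω → A} {Y : Ω → B} (h : SameFibers X Y)
    (μ : Ω → ℝ) (ω : Ω) : pr μ X (X ω) = pr μ Y (Y ω) :=
  pr_congr fun ω' => h ω' ω

lemma SameFibers.ent_eq {A B : Type} [Fintype A] [Fintype B] {X : Ω → A} {Y : Ω → B}
    (h : SameFibers X Y) (μ : Ω → ℝ) : ent μ X = ent μ Y := by
  simp only [ent_eq_neg_sum, h.pr_apply_eq]

section cmi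

variable {A B C D A' B' C' : Type} [Fintype A] [Fintype B] [Fintype C] [Fintype D]
  (μ : Ω → ℝ)

lemma cmi_congr [Fintype A'] [Fintype B'] [Fintype C'] {X : Ω → A} {Y : Ω → B} {Z : Ω → C}
    {X' : Ω → A'} {Y' : Ω → B'} {Z' : Ω → C'}
    (hX : SameFibers X X') (hY : SameFibers Y Y') (hZ : SameFibers Z Z') :
    cmi μ X Y Z = cmi μ X' Y' Z' := by
  simp only [cmi, (hX.prod hZ).ent_eq, (hY.prod hZ).ent_eq, (hX.prod (hY.prod hZ)).ent_eq,
    hZ.ent_eq]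

lemma cmi_comm (X : Ω → A) (Y : Ω → B) (Z : Ω → C) : cmi μ X Y Z = cmi μ Y X Z := by
  have : SameFibers (fun ω => (X ω, Y ω, Z ω)) (fun ω => (Y ω, X ω, Z ω)) := by
    intro ω ω'
    simp only [Prod.mk.injEq]
    tauto
  simp only [cmi, this.ent_eq]
  ring

lemma cmi_const_right (X : Ω → A) (b : B) (Z : Ω → C) : cmi μ X (fun _ => b) Z = 0 := by
  have h₁ : SameFibers (fun ω => (b, Z ω)) Z := fun ω ω' => by simp
  have h₂ : SameFibers (fun ω => (X ω, b, Z ω)) (fun ω => (X ω, Z ω)) := fun ω ω' => by simp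
  simp only [cmi, h₁.ent_eq, h₂.ent_eq]
  ring

lemma cmi_prod_right (X : Ω → A) (Y : Ω → B) (Y' : Ω → C) (Z : Ω → D) :
    cmi μ X (fun ω => (Y ω, Y' ω)) Z
      = cmi μ X Y' Z + cmi μ X Y (fun ω => (Y' ω, Z ω)) := by
  have h₁ : SameFibers (fun ω => ((Y ω, Y' ω), Z ω)) (fun ω => (Y ω, Y' ω, Z ω)) :=
    fun ω ω' => by simp [and_assoc]
  have h₂ : SameFibers (fun ω => (X ω, (Y ω, Y' ω), Z ω)) (fun ω => (X ω, Y ω, Y' ω, Z ω)) :=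
    fun ω ω' => by simp [and_assoc]
  simp only [cmi, h₁.ent_eq, h₂.ent_eq]
  ring

end cmi

section chain

variable {A B C : Type} [Fintype A] [Fintype B] [Fintype C] (μ : Ω → ℝ)

lemma cmi_pi_right {n : ℕ} (X : Ω → A) (Y : Fin n → Ω → B) (Z : Ω → C) :
    cmi μ X (fun ω j => Y j ω) Z
      = ∑ i, cmi μ X (Y i) (fun ω => ((fun j : {j : Fin n // i < j} => Y j ω), Z ω)) := by
  let tail (k : ℕ) (ω : Ω) : {j : Fin n // k ≤ j} → B := fun j => Y j ω
  have peel (i : Fin n) :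
      cmi μ X (Y i) (fun ω => ((fun j : {j : Fin n // i < j} => Y j ω), Z ω))
        = cmi μ X (tail i) Z - cmi μ X (tail (i + 1)) Z := by
    have h₁ : SameFibers (tail i) (fun ω => (Y i ω, tail (i + 1) ω)) := by
      intro ω ω'
      simp only [tail, funext_iff, Subtype.forall, Prod.mk.injEq]
      constructor
      · intro h
        exact ⟨h i le_rfl, fun j hj => h j (by omega)⟩
      · rintro ⟨hi, h⟩ j hj
        rcases (Nat.le_iff_lt_or_eq.mp hj) with hj | hj
        · exact h j hj
        · rw [← Fin.ext hj]
          exact hi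
    have h₂ : SameFibers (fun ω => ((fun j : {j : Fin n // i < j} => Y j ω), Z ω))
        (fun ω => (tail (i + 1) ω, Z ω)) := by
      refine SameFibers.prod (fun ω ω' => ?_) (sameFibers_refl Z)
      simp only [tail, funext_iff, Subtype.forall, Fin.lt_def, Nat.succ_le_iff]
    rw [cmi_congr μ (sameFibers_refl X) h₁ (sameFibers_refl Z), cmi_prod_right,
      cmi_congr μ (sameFibers_refl X) (sameFibers_refl (Y i)) h₂]
    ring
  have first : SameFibers (fun ω j => Y j ω) (tail 0) := fun ω ω' => by
    simp [tail, funext_iff]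
  have last : SameFibers (tail n) (fun _ => ()) := fun ω ω' => by
    simp [tail, funext_iff]
  simp only [peel]
  rw [Fin.sum_univ_eq_sum_range (fun k => cmi μ X (tail k) Z - cmi μ X (tail (k + 1)) Z),
    Finset.sum_range_sub', cmi_congr μ (sameFibers_refl X) first (sameFibers_refl Z),
    cmi_congr μ (sameFibers_refl X) last (sameFibers_refl Z), cmi_const_right]
  ring

end chain

section condIndep

variable {A B C D : Type} [Fintype A] [Fintype B] [Fintype C] [Fintype D] {μ : Ω → ℝ}

lemma cmi_cond_prod_eq_of_cmi_eq_zero (X : Ω → A) (Y : Ω → B) (V : Ω → C) (W : Ω → D)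
    (h₁ : cmi μ X V W = 0) (h₂ : cmi μ X V (fun ω => (Y ω, W ω)) = 0) :
    cmi μ X Y (fun ω => (V ω, W ω)) = cmi μ X Y W := by
  have swap : SameFibers (fun ω => (Y ω, V ω)) (fun ω => (V ω, Y ω)) := fun ω ω' => by
    simp only [Prod.mk.injEq]
    tauto
  have := cmi_congr μ (sameFibers_refl X) swap (sameFibers_refl W)
  rw [cmi_prod_right, cmi_prod_right, h₁, h₂] at this
  linarith

lemma CondIndep.cmi_eq_zero (hμ : ∀ ω, 0 ≤ μ ω) {X : Ω → A} {Y : Ω → B} {Z : Ω → C}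
    (h : CondIndep μ X Y Z) : cmi μ X Y Z = 0 := by
  have key (ω : Ω) :
      μ ω * Real.logb 2 (pr μ (fun ω => (X ω, Z ω)) (X ω, Z ω))
        + μ ω * Real.logb 2 (pr μ (fun ω => (Y ω, Z ω)) (Y ω, Z ω))
        = μ ω * Real.logb 2 (pr μ (fun ω => (X ω, Y ω, Z ω)) (X ω, Y ω, Z ω))
          + μ ω * Real.logb 2 (pr μ Z (Z ω)) := by
    rcases (hμ ω).eq_or_lt with hω | hω
    · simp [← hω]
    have pos {E : Type} (U : Ω → E) : pr μ U (U ω) ≠ 0 :=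
      (hω.trans_le (le_pr_apply hμ U ω)).ne'
    rw [← mul_add, ← mul_add, ← Real.logb_mul (pos _) (pos _),
      ← Real.logb_mul (pos (fun ω => (X ω, Y ω, Z ω))) (pos Z), h _ _ _ (pos Z)]
  have := Finset.sum_congr rfl fun ω (_ : ω ∈ Finset.univ) => key ω
  simp only [Finset.sum_add_distrib] at this
  simp only [cmi, ent_eq_neg_sum]
  linarith

end condIndep

lemma pr_prod_comp_left {A B C : Type} [Fintype A] (μ : Ω → ℝ) {W : Ω → A} {X : Ω → B}
    (F : A → B) (hX : ∀ ω, X ω = F (W ω)) (R : Ω → C) (b : B) (c : C) :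
    pr μ (fun ω => (X ω, R ω)) (b, c)
      = ∑ a, if F a = b then pr μ (fun ω => (W ω, R ω)) (a, c) else 0 := by
  simp_rw [pr, Finset.ite_sum_zero]
  rw [Finset.sum_comm]
  refine Finset.sum_congr rfl fun ω _ => ?_
  rw [Fintype.sum_eq_single (W ω) fun a ha => by simp [Ne.symm ha]]
  simp [hX, ite_and]

lemma sum_pr_prod_left {A B : Type} [Fintype A] (μ : Ω → ℝ) (X : Ω → A) (Y : Ω → B) (b : B) :
    ∑ a, pr μ (fun ω => (X ω, Y ω)) (a, b) = pr μ Y b := by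
  simp only [pr]
  rw [Finset.sum_comm]
  refine Finset.sum_congr rfl fun ω _ => ?_
  simp [ite_and]

lemma pr_eq_ite {A B : Type} {μ : Ω → ℝ} {X : Ω → A} {Y : Ω → B} {a : A} {b : B} {P : Prop}
    [Decidable P] (h : ∀ ω, X ω = a ↔ Y ω = b ∧ P) :
    pr μ X a = if P then pr μ Y b else 0 := by
  split_ifs with hP
  · exact pr_congr fun ω => by simp [h ω, hP]
  · exact Finset.sum_eq_zero fun ω _ => by simp [h ω, hP]

/-- Unlike `CondIndep`, this form is visibly preserved when a function of `(U, R)` or of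
`(T, R)` is appended to `R`. -/
def Factorizes {A B C : Type} (μ : Ω → ℝ) (U : Ω → A) (T : Ω → B) (R : Ω → C) : Prop :=
  ∃ (α : A → C → ℝ) (β : B → C → ℝ),
    ∀ a b c, pr μ (fun ω => (U ω, T ω, R ω)) (a, b, c) = α a c * β b c

namespace Factorizes

variable {A B C A' B' G : Type} {μ : Ω → ℝ} {U : Ω → A} {T : Ω → B} {R : Ω → C}

lemma symm (h : Factorizes μ U T R) : Factorizes μ T U R := by
  obtain ⟨α, β, hf⟩ := h
  refine ⟨β, α, fun b a c => ?_⟩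
  rw [mul_comm, ← hf]
  exact pr_congr fun ω => by simp only [Prod.mk.injEq]; tauto

lemma comp_left [Fintype A] (h : Factorizes μ U T R) {X : Ω → A'} (x : A → A')
    (hX : ∀ ω, X ω = x (U ω)) : Factorizes μ X T R := by
  obtain ⟨α, β, hf⟩ := h
  refine ⟨fun a' c => ∑ a, if x a = a' then α a c else 0, β, fun a' b c => ?_⟩
  rw [pr_prod_comp_left μ x hX, Finset.sum_mul]
  simp only [hf, ite_mul, zero_mul]

lemma comp_right [Fintype B] (h : Factorizes μ U T R) {Y : Ω → B'} (y : B → B')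
    (hY : ∀ ω, Y ω = y (T ω)) : Factorizes μ U Y R :=
  (h.symm.comp_left y hY).symm

lemma append_left (h : Factorizes μ U T R) {M : Ω → G} (g : A → C → G)
    (hM : ∀ ω, M ω = g (U ω) (R ω)) : Factorizes μ U T (fun ω => (R ω, M ω)) := by
  obtain ⟨α, β, hf⟩ := h
  refine ⟨fun a r => if g a r.1 = r.2 then α a r.1 else 0, fun b r => β b r.1,
    fun a b ⟨c, m⟩ => ?_⟩
  rw [pr_eq_ite (Y := fun ω => (U ω, T ω, R ω)) (b := (a, b, c)) (P := g a c = m), hf]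
  · rw [ite_mul, zero_mul]
  · intro ω
    simp only [Prod.mk.injEq, hM ω]
    constructor
    · rintro ⟨hU, hT, hR, hm⟩
      exact ⟨⟨hU, hT, hR⟩, by rwa [← hU, ← hR]⟩
    · rintro ⟨⟨hU, hT, hR⟩, hm⟩
      exact ⟨hU, hT, hR, by rwa [hU, hR]⟩

lemma append_right (h : Factorizes μ U T R) {M : Ω → G} (g : B → C → G)
    (hM : ∀ ω, M ω = g (T ω) (R ω)) : Factorizes μ U T (fun ω => (R ω, M ω)) :=
  (h.symm.append_left g hM).symm

lemma condIndep [Fintype A] [Fintype B] (h : Factorizes μ U T R) : CondIndep μ U T R := by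
  obtain ⟨α, β, hf⟩ := h
  intro a b c _
  have hUR (a : A) : pr μ (fun ω => (U ω, R ω)) (a, c) = α a c * ∑ b, β b c := by
    rw [← sum_pr_prod_left μ T, Finset.mul_sum]
    refine Finset.sum_congr rfl fun b _ => ?_
    rw [← hf]
    exact pr_congr fun ω => by simp only [Prod.mk.injEq]; tauto
  have hTR : pr μ (fun ω => (T ω, R ω)) (b, c) = (∑ a, α a c) * β b c := by
    rw [← sum_pr_prod_left μ U, Finset.sum_mul]
    exact Finset.sum_congr rfl fun a _ => hf a b c
  have hR : pr μ R c = (∑ a, α a c) * ∑ b, β b c := by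
    rw [← sum_pr_prod_left μ U, Finset.sum_mul]
    exact Finset.sum_congr rfl fun a _ => hUR a
  rw [hf, hUR, hTR, hR]
  ring

lemma cmi_eq_zero_of_comp [Fintype A] [Fintype B] [Fintype C] [Fintype A'] [Fintype B']
    (hμ : ∀ ω, 0 ≤ μ ω) (h : Factorizes μ U T R) {X : Ω → A'} {Y : Ω → B'} (x : A → A')
    (hX : ∀ ω, X ω = x (U ω)) (y : B → B') (hY : ∀ ω, Y ω = y (T ω)) : cmi μ X Y R = 0 :=
  ((h.comp_left x hX).comp_right y hY).condIndep.cmi_eq_zero hμ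

end Factorizes

lemma factorizes_of_pr_eq_mul_prod {ι E N N' : Type} [Fintype ι] (p : ι → Prop) {μ : Ω → ℝ}
    {M : Ω → N} {M' : Ω → N'} {W : Ω → ι → E} (q : E → ℝ)
    (h : ∀ m m' w, pr μ (fun ω => (M ω, M' ω, W ω)) (m, m', w)
      = pr μ M m * pr μ M' m' * ∏ j, q (w j)) :
    Factorizes μ (fun ω => (M ω, fun j : {j // p j} => W ω j))
      (fun ω => (M' ω, fun j : {j // ¬ p j} => W ω j)) (fun _ => ()) := by
  refine ⟨fun a _ => pr μ M a.1 * ∏ j, q (a.2 j), fun b _ => pr μ M' b.1 * ∏ j, q (b.2 j),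
    fun a b _ => ?_⟩
  let e := Equiv.piEquivPiSubtypeProd p fun _ => E
  have split : pr μ (fun ω => ((M ω, fun j : {j // p j} => W ω j),
        (M' ω, fun j : {j // ¬ p j} => W ω j), ())) (a, b, ())
      = pr μ (fun ω => (M ω, M' ω, W ω)) (a.1, b.1, e.symm (a.2, b.2)) :=
    pr_congr fun ω => by
      simp only [Prod.mk.injEq, and_true, Equiv.eq_symm_apply]
      simp only [e, Equiv.piEquivPiSubtypeProd, Equiv.coe_fn_mk, Prod.ext_iff]
      tauto
  have h₁ : ∏ j : {j // p j}, q (e.symm (a.2, b.2) j) = ∏ j, q (a.2 j) :=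
    Finset.prod_congr rfl fun j _ => by simp [e, Equiv.piEquivPiSubtypeProd, j.2]
  have h₂ : ∏ j : {j // ¬ p j}, q (e.symm (a.2, b.2) j) = ∏ j, q (b.2 j) :=
    Finset.prod_congr rfl fun j _ => by simp [e, Equiv.piEquivPiSubtypeProd, j.2]
  rw [split, h, ← Fintype.prod_subtype_mul_prod_subtype p, h₁, h₂]
  ring

lemma forall_le_iff_forall_lt_and {ι : Type} [PartialOrder ι] {P : ι → Prop} {i : ι} :
    (∀ j ≤ i, P j) ↔ (∀ j < i, P j) ∧ P i :=
  ⟨fun h => ⟨fun j hj => h j hj.le, h i le_rfl⟩,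
    fun ⟨h, hi⟩ j hj => hj.lt_or_eq.elim (h j) fun hji => hji ▸ hi⟩

lemma forall_iff_forall_lt_and_and_forall_gt {ι : Type} [LinearOrder ι] {P : ι → Prop} (i : ι) :
    (∀ j, P j) ↔ (∀ j < i, P j) ∧ P i ∧ ∀ j, i < j → P j := by
  rw [← and_assoc, ← forall_le_iff_forall_lt_and]
  exact ⟨fun h => ⟨fun j _ => h j, fun j _ => h j⟩,
    fun ⟨hle, hgt⟩ j => (le_or_gt j i).elim (hle j) (hgt j)⟩

section TwoWay

variable {n : ℕ} {𝒮₁ 𝒮₂ ℳ₁ ℳ₂ ℳ₁₂ ℳ₂₁ : Type} {μ : Ω → ℝ} {S1 : Fin n → Ω → 𝒮₁}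
  {S2 : Fin n → Ω → 𝒮₂} {M1 : Ω → ℳ₁} {M2 : Ω → ℳ₂} {M12 : Ω → ℳ₁₂} {M21 : Ω → ℳ₂₁}

lemma factorizes_past_future (q : 𝒮₁ × 𝒮₂ → ℝ)
    (hS : ∀ m1 m2 s, pr μ (fun ω => (M1 ω, M2 ω, fun j => (S1 j ω, S2 j ω))) (m1, m2, s)
      = pr μ M1 m1 * pr μ M2 m2 * ∏ j, q (s j))
    (f12 : ℳ₁ → (Fin n → 𝒮₁) → ℳ₁₂) (hM12 : ∀ ω, M12 ω = f12 (M1 ω) (fun j => S1 j ω))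
    (i : Fin n) :
    Factorizes μ (fun ω => (M2 ω, fun j : {j // ¬ i < j} => (S1 j ω, S2 j ω)))
      (fun ω => (M1 ω, fun j : {j // i < j} => (S1 j ω, S2 j ω)))
      (fun ω => ((((), fun j : {j // ¬ i < j} => S1 j ω), fun j : {j // i < j} => S2 j ω),
        M12 ω)) :=
  (factorizes_of_pr_eq_mul_prod (i < ·) q hS).symm
    |>.append_left (fun u _ j => (u.2 j).1) (fun _ => rfl)
    |>.append_right (fun t _ j => (t.2 j).2) (fun _ => rfl)
    |>.append_right
      (fun t r => f12 t.1 fun j => if h : i < j then (t.2 ⟨j, h⟩).1 else r.1.2 ⟨j, h⟩)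
      fun ω => by
        rw [hM12]
        congr 1
        funext j
        split_ifs <;> rfl

lemma cmi_future_states_eq_zero [Fintype 𝒮₁] [Fintype 𝒮₂] [Fintype ℳ₁] [Fintype ℳ₂]
    [Fintype ℳ₁₂] [Fintype ℳ₂₁] (hμ : ∀ ω, 0 ≤ μ ω) {i : Fin n}
    (hF : Factorizes μ (fun ω => (M2 ω, fun j : {j // ¬ i < j} => (S1 j ω, S2 j ω)))
      (fun ω => (M1 ω, fun j : {j // i < j} => (S1 j ω, S2 j ω)))
      (fun ω => ((((), fun j : {j // ¬ i < j} => S1 j ω), fun j : {j // i < j} => S2 j ω),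
        M12 ω)))
    (f21 : ℳ₂ → ℳ₁₂ → (Fin n → 𝒮₂) → ℳ₂₁)
    (hM21 : ∀ ω, M21 ω = f21 (M2 ω) (M12 ω) (fun j => S2 j ω)) :
    cmi μ (S2 i) (fun ω (j : {j // i < j}) => S1 j ω) (fun ω => ((M12 ω,
        (fun j : {j // j < i} => S1 j ω), (fun j : {j // i < j} => S2 j ω)), S1 i ω)) = 0 ∧
    cmi μ (S2 i) (fun ω (j : {j // i < j}) => S1 j ω) (fun ω => (M21 ω, (M12 ω,
        (fun j : {j // j < i} => S1 j ω), (fun j : {j // i < j} => S2 j ω)), S1 i ω)) = 0 := by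
  have hF' := hF.append_left
    (fun u r => f21 u.1 r.2 fun j => if h : i < j then r.1.2 ⟨j, h⟩ else (u.2 ⟨j, h⟩).2)
    (M := M21) fun ω => by
      rw [hM21]
      congr 1
      funext j
      split_ifs <;> rfl
  have hR : SameFibers (fun ω => ((((), fun j : {j // ¬ i < j} => S1 j ω),
      fun j : {j // i < j} => S2 j ω), M12 ω))
      (fun ω => ((M12 ω, (fun j : {j // j < i} => S1 j ω),
          (fun j : {j // i < j} => S2 j ω)), S1 i ω)) := by
    intro ω ω'
    simp only [funext_iff, Prod.ext_iff, Subtype.forall, not_lt, forall_le_iff_forall_lt_and]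
    tauto
  have hR' : SameFibers (fun ω => ((((((), fun j : {j // ¬ i < j} => S1 j ω),
      fun j : {j // i < j} => S2 j ω), M12 ω)), M21 ω))
      (fun ω => (M21 ω, (M12 ω, (fun j : {j // j < i} => S1 j ω),
          (fun j : {j // i < j} => S2 j ω)), S1 i ω)) := fun ω ω' =>
    Prod.mk_inj.trans ((and_congr_left' (hR ω ω')).trans (and_comm.trans Prod.mk_inj.symm))
  constructor
  · rw [← cmi_congr μ (sameFibers_refl _) (sameFibers_refl _) hR]
    exact hF.cmi_eq_zero_of_comp hμ (fun u => (u.2 ⟨i, lt_irrefl i⟩).2) (fun _ => rfl)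
      (fun t j => (t.2 j).1) fun _ => rfl
  · rw [← cmi_congr μ (sameFibers_refl _) (sameFibers_refl _) hR']
    exact hF'.cmi_eq_zero_of_comp hμ (fun u => (u.2 ⟨i, lt_irrefl i⟩).2) (fun _ => rfl)
      (fun t j => (t.2 j).1) fun _ => rfl

lemma cmi_cond_drop_future [Fintype 𝒮₁] [Fintype 𝒮₂] [Fintype ℳ₁₂] [Fintype ℳ₂₁] {i : Fin n}
    (h : cmi μ (S2 i) (fun ω (j : {j // i < j}) => S1 j ω) (fun ω => ((M12 ω,
        (fun j : {j // j < i} => S1 j ω), (fun j : {j // i < j} => S2 j ω)), S1 i ω)) = 0 ∧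
      cmi μ (S2 i) (fun ω (j : {j // i < j}) => S1 j ω) (fun ω => (M21 ω, (M12 ω,
        (fun j : {j // j < i} => S1 j ω), (fun j : {j // i < j} => S2 j ω)), S1 i ω)) = 0) :
    cmi μ (S2 i) M21 (fun ω => ((fun j : {j // i < j} => S2 j ω), (M12 ω, fun j => S1 j ω)))
      = cmi μ (S2 i) M21 (fun ω => ((M12 ω, (fun j : {j // j < i} => S1 j ω),
          (fun j : {j // i < j} => S2 j ω)), S1 i ω)) := by
  have hcond : SameFibers
      (fun ω => ((fun j : {j // i < j} => S2 j ω), (M12 ω, fun j => S1 j ω)))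
      (fun ω => ((fun j : {j // i < j} => S1 j ω), ((M12 ω, (fun j : {j // j < i} => S1 j ω),
          (fun j : {j // i < j} => S2 j ω)), S1 i ω))) := by
    intro ω ω'
    simp only [funext_iff, Prod.ext_iff, Subtype.forall]
    rw [forall_iff_forall_lt_and_and_forall_gt (P := fun j => S1 j ω = S1 j ω') i]
    tauto
  rw [cmi_congr μ (sameFibers_refl _) (sameFibers_refl _) hcond]
  exact cmi_cond_prod_eq_of_cmi_eq_zero _ _ _ _ h.1 h.2

end TwoWay

theorem cmi_state_decomposition_two_way_back_general
    {Ω : Type} [Fintype Ω] (μ : Ω → ℝ) (hμ : IsPMF μ)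
    {n : ℕ} {𝒮₁ 𝒮₂ ℳ₁ ℳ₂ ℳ₁₂ ℳ₂₁ : Type}
    [Fintype 𝒮₁] [Fintype 𝒮₂] [Fintype ℳ₁] [Fintype ℳ₂] [Fintype ℳ₁₂] [Fintype ℳ₂₁]
    (S1 : Fin n → Ω → 𝒮₁) (S2 : Fin n → Ω → 𝒮₂) (M1 : Ω → ℳ₁) (M2 : Ω → ℳ₂)
    (q : 𝒮₁ × 𝒮₂ → ℝ)
    (hiid : ∀ s : Fin n → 𝒮₁ × 𝒮₂,
      pr μ (fun ω => fun i => (S1 i ω, S2 i ω)) s = ∏ i, q (s i))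
    (hindep : ∀ (m1 : ℳ₁) (m2 : ℳ₂) (s : Fin n → 𝒮₁ × 𝒮₂),
      pr μ (fun ω => (M1 ω, M2 ω, fun i => (S1 i ω, S2 i ω))) (m1, m2, s)
        = pr μ M1 m1 * pr μ M2 m2 * pr μ (fun ω => fun i => (S1 i ω, S2 i ω)) s)
    (f12 : ℳ₁ → (Fin n → 𝒮₁) → ℳ₁₂)
    (f21 : ℳ₂ → ℳ₁₂ → (Fin n → 𝒮₂) → ℳ₂₁)
    (M12 : Ω → ℳ₁₂) (hM12 : ∀ ω, M12 ω = f12 (M1 ω) (fun i => S1 i ω))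
    (M21 : Ω → ℳ₂₁) (hM21 : ∀ ω, M21 ω = f21 (M2 ω) (M12 ω) (fun i => S2 i ω)) :
    cmi μ M21 (fun ω => fun i => S2 i ω)
        (fun ω => (M12 ω, fun i => S1 i ω))
      = ∑ i : Fin n, cmi μ (S2 i) M21
          (fun ω => ((M12 ω, (fun j : {j : Fin n // j < i} => S1 j.1 ω),
            (fun j : {j : Fin n // i < j} => S2 j.1 ω)), S1 i ω)) := by
  have hS (m1 : ℳ₁) (m2 : ℳ₂) (s : Fin n → 𝒮₁ × 𝒮₂) :
      pr μ (fun ω => (M1 ω, M2 ω, fun i => (S1 i ω, S2 i ω))) (m1, m2, s)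
        = pr μ M1 m1 * pr μ M2 m2 * ∏ i, q (s i) := by
    rw [hindep, hiid]
  rw [cmi_pi_right]
  refine Finset.sum_congr rfl fun i _ => ?_
  rw [cmi_comm]
  exact cmi_cond_drop_future
    (cmi_future_states_eq_zero hμ.1 (factorizes_past_future q hS f12 hM12 i) f21 hM21)

/-- Converse step for Theorem 2, eq. (42): with `(S₁ᵢ,S₂ᵢ)` i.i.d., `M₁,M₂` mutually
independent and independent of the states, `M₁₂ = f₁₂(M₁,S₁ⁿ)` and
`M₂₁ = f₂₁(M₂,M₁₂,S₂ⁿ)`, one has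
`I(M₂₁;S₂ⁿ|M₁₂,S₁ⁿ) = Σᵢ I(S₂ᵢ;Vᵢ|Uᵢ,S₁ᵢ)` where `Uᵢ = (M₁₂,S₁ⁱ⁻¹,S₂ᵢ₊₁ⁿ)` and
`Vᵢ = M₂₁`. -/
theorem cmi_state_decomposition_two_way_back
    {Ω : Type} [Fintype Ω] (μ : Ω → ℝ) (hμ : IsPMF μ)
    {n : ℕ} {𝒮₁ 𝒮₂ ℳ₁ ℳ₂ ℳ₁₂ ℳ₂₁ : Type}
    [Fintype 𝒮₁] [Fintype 𝒮₂] [Fintype ℳ₁] [Fintype ℳ₂] [Fintype ℳ₁₂] [Fintype ℳ₂₁]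
    (S1 : Fin n → Ω → 𝒮₁) (S2 : Fin n → Ω → 𝒮₂) (M1 : Ω → ℳ₁) (M2 : Ω → ℳ₂)
    (q : 𝒮₁ × 𝒮₂ → ℝ) (hq : IsPMF q)
    (hiid : ∀ s : Fin n → 𝒮₁ × 𝒮₂,
      pr μ (fun ω => fun i => (S1 i ω, S2 i ω)) s = ∏ i, q (s i))
    (hindep : ∀ (m1 : ℳ₁) (m2 : ℳ₂) (s : Fin n → 𝒮₁ × 𝒮₂),
      pr μ (fun ω => (M1 ω, M2 ω, fun i => (S1 i ω, S2 i ω))) (m1, m2, s)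
        = pr μ M1 m1 * pr μ M2 m2 * pr μ (fun ω => fun i => (S1 i ω, S2 i ω)) s)
    (f12 : ℳ₁ → (Fin n → 𝒮₁) → ℳ₁₂)
    (f21 : ℳ₂ → ℳ₁₂ → (Fin n → 𝒮₂) → ℳ₂₁)
    (M12 : Ω → ℳ₁₂) (hM12 : ∀ ω, M12 ω = f12 (M1 ω) (fun i => S1 i ω))
    (M21 : Ω → ℳ₂₁) (hM21 : ∀ ω, M21 ω = f21 (M2 ω) (M12 ω) (fun i => S2 i ω)) :
    cmi μ M21 (fun ω => fun i => S2 i ω)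
        (fun ω => (M12 ω, fun i => S1 i ω))
      = ∑ i : Fin n, cmi μ (S2 i) M21
          (fun ω => ((M12 ω, (fun j : {j : Fin n // j < i} => S1 j.1 ω),
            (fun j : {j : Fin n // i < j} => S2 j.1 ω)), S1 i ω)) :=
  cmi_state_decomposition_two_way_back_general μ hμ S1 S2 M1 M2 q hiid hindep f12 f21 M12 hM12 M21
    hM21

end Paper
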